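/- Let T : C(K) → C(L) be a linear isomorphism between C(K)-spaces (K, L compact Hausdorff) such that T⁻¹ is positive. Suppose h ∈ C(K) and there exists x ∈ K with h(x) = 1. Suppose further there exists ĥ ∈ C(K) such that for every y ∈ L: (Tĥ)(y) = (Th)(y) if (Th)(y) ≥ 0, and (Tĥ)(y) = 0 otherwise. Then there exists y ∈ L with (Th)(y) ≥ 1 — provided T is norm-increasing (‖Tg‖ ≥ ‖g‖ for all g). -/
import Mathlib

theorem stmt_13 (K L : Type*) [TopologicalSpace K] [CompactSpace K] [T2Space K]
    [TopologicalSpace L] [CompactSpace L] [T2Space L]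
    (T : C(K, ℝ) ≃ₗ[ℝ] C(L, ℝ))
    (hinvpos : ∀ f : C(K, ℝ), 0 ≤ T f → 0 ≤ f)
    (hni : ∀ f : C(K, ℝ), ‖f‖ ≤ ‖T f‖)
    (h : C(K, ℝ)) (x : K) (hx : h x = 1)
    (hhat : C(K, ℝ))
    (hhhat : ∀ y : L, T hhat y = if 0 ≤ T h y then T h y else 0) :
    ∃ y : L, 1 ≤ T h y := by
  have hsub : (0 : C(K, ℝ)) ≤ hhat - h := by
    apply hinvpos
    rw [map_sub, ContinuousMap.le_def]
    intro y
    simp only [ContinuousMap.zero_apply, ContinuousMap.sub_apply, hhhat y]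
    by_cases hy : 0 ≤ T h y
    · simp [hy]
    · simp only [hy, if_false]
      linarith [not_le.mp hy]
  have hge : (1 : ℝ) ≤ hhat x := by
    have := (ContinuousMap.le_def.mp hsub) x
    simp only [ContinuousMap.zero_apply, ContinuousMap.sub_apply] at this
    linarith
  have hn : (1 : ℝ) ≤ ‖T hhat‖ := by
    refine le_trans ?_ (hni hhat)
    calc (1:ℝ) ≤ hhat x := hge
    _ ≤ ‖hhat x‖ := le_abs_self _
    _ ≤ ‖hhat‖ := hhat.norm_coe_le_norm x
  by_contra hc
  push_neg at hc
  have : ‖T hhat‖ < 1 := by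
    rw [ContinuousMap.norm_lt_iff _ one_pos]
    intro y
    rw [Real.norm_eq_abs, hhhat y]
    by_cases hy : 0 ≤ T h y
    · rw [if_pos hy, abs_of_nonneg hy]; exact hc y
    · rw [if_neg hy]; simp
  linarith
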